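/- If G has maximum SLEE among all connected graphs on n vertices with r cut vertices, then every block of G is a complete graph. -/

import Mathlib

open scoped Classical

variable {V : Type*}

/-- The signless Laplacian matrix `Q = D + A` of a graph. -/
noncomputable def sLap (G : SimpleGraph V) [Fintype V] : Matrix V V ℝ :=
  Matrix.diagonal (fun v => (G.degree v : ℝ)) + G.adjMatrix ℝ

theorem sLap_isHermitian (G : SimpleGraph V) [Fintype V] : (sLap G).IsHermitian := by
  unfold sLap
  rw [Matrix.IsHermitian, Matrix.conjTranspose_eq_transpose_of_trivial, Matrix.transpose_add,
    Matrix.diagonal_transpose, SimpleGraph.transpose_adjMatrix]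

/-- The Laplacian matrix `L = D - A` of a graph. -/
noncomputable def lap (G : SimpleGraph V) [Fintype V] : Matrix V V ℝ :=
  Matrix.diagonal (fun v => (G.degree v : ℝ)) - G.adjMatrix ℝ

theorem lap_isHermitian (G : SimpleGraph V) [Fintype V] : (lap G).IsHermitian := by
  unfold lap
  rw [Matrix.IsHermitian, Matrix.conjTranspose_eq_transpose_of_trivial, Matrix.transpose_sub,
    Matrix.diagonal_transpose, SimpleGraph.transpose_adjMatrix]

/-- The signless Laplacian Estrada index: the sum of `exp qᵢ` over the eigenvalues of `Q`. -/
noncomputable def SLEE (G : SimpleGraph V) [Fintype V] : ℝ :=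
  ∑ i, Real.exp ((sLap_isHermitian G).eigenvalues i)

/-- The Laplacian Estrada index: the sum of `exp μᵢ` over the eigenvalues of `L`. -/
noncomputable def LEE (G : SimpleGraph V) [Fintype V] : ℝ :=
  ∑ i, Real.exp ((lap_isHermitian G).eigenvalues i)

/-- Semi-edge walks of length `k` from `x` to `y`: a sequence of `k+1` vertices and `k`
edges of `G` such that consecutive vertices are (not necessarily distinct) endpoints of
the intervening edge. -/
def semiEdgeWalks (G : SimpleGraph V) (k : ℕ) (x y : V) :
    Set ((Fin (k + 1) → V) × (Fin k → Sym2 V)) :=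
  {w | w.1 0 = x ∧ w.1 (Fin.last k) = y ∧
    ∀ i : Fin k, w.2 i ∈ G.edgeSet ∧ w.1 i.castSucc ∈ w.2 i ∧ w.1 i.succ ∈ w.2 i}

/-- Closed semi-edge walks of length `k` in `G`. -/
def closedSemiEdgeWalks (G : SimpleGraph V) (k : ℕ) :
    Set ((Fin (k + 1) → V) × (Fin k → Sym2 V)) :=
  {w | w.1 0 = w.1 (Fin.last k) ∧
    ∀ i : Fin k, w.2 i ∈ G.edgeSet ∧ w.1 i.castSucc ∈ w.2 i ∧ w.1 i.succ ∈ w.2 i}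

/-- The number of connected components of a graph. -/
noncomputable def numComponents (G : SimpleGraph V) : ℕ := Nat.card G.ConnectedComponent

/-- A cut vertex: a vertex whose removal increases the number of connected components. -/
def IsCutVertex (G : SimpleGraph V) (v : V) : Prop :=
  numComponents G < numComponents (G.induce ({v}ᶜ : Set V))

/-- The number of cut vertices of a graph. -/
noncomputable def cutVertexCount (G : SimpleGraph V) [Fintype V] : ℕ :=
  (Finset.univ.filter (fun v => IsCutVertex G v)).card

/-- The graph obtained from `G` by adding the edge `uv`. -/
def addEdge (G : SimpleGraph V) (u v : V) : SimpleGraph V :=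
  G ⊔ SimpleGraph.fromEdgeSet {s(u, v)}

/-- A block of `G`: a maximal vertex set inducing a connected subgraph with no cut vertex. -/
def IsBlock (G : SimpleGraph V) (B : Set V) : Prop :=
  (G.induce B).Connected ∧ (∀ v : B, ¬ IsCutVertex (G.induce B) v) ∧
  ∀ C : Set V, B ⊆ C → (G.induce C).Connected → (∀ v : C, ¬ IsCutVertex (G.induce C) v) →
    B = C

/-!
Adding a missing edge `xy` inside a block `B` keeps `G` connected and changes no vertex's status
as a cut vertex: `x` and `y` are already joined in `G` and in every `G - v`, since `G[B]` is
connected and has no cut vertex. On the other hand `SLEE G = ∑ₖ tr(Qᵏ)/k!`, where the signless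
Laplacian `Q` is entrywise nonnegative and entrywise monotone in `G`, and the new edge makes
`tr(Q²)` strictly larger; so `SLEE` is strictly monotone and a maximiser has no missing edge inside
a block.
-/

open Matrix Finset
open scoped Nat

namespace Matrix

variable {n : Type*} [Fintype n] [DecidableEq n]

theorem IsHermitian.trace_pow {𝕜 : Type*} [RCLike 𝕜] {A : Matrix n n 𝕜}
    (hA : A.IsHermitian) (k : ℕ) : (A ^ k).trace = ∑ i, (hA.eigenvalues i : 𝕜) ^ k := by
  conv_lhs => rw [hA.spectral_theorem, ← map_pow, Unitary.conjStarAlgAut_apply, trace_mul_cycle,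
    Unitary.coe_star_mul_self, one_mul, diagonal_pow, trace_diagonal]
  rfl

theorem IsHermitian.hasSum_trace_pow_div_factorial {A : Matrix n n ℝ} (hA : A.IsHermitian) :
    HasSum (fun k ↦ (A ^ k).trace / k !) (∑ i, Real.exp (hA.eigenvalues i)) := by
  simp_rw [hA.trace_pow, RCLike.ofReal_real_eq_id, id, sum_div, Real.exp_eq_exp_ℝ]
  exact hasSum_sum fun i _ ↦ NormedSpace.expSeries_div_hasSum_exp _

variable {R : Type*} [Semiring R] [PartialOrder R] {A B : Matrix n n R}

theorem pow_apply_le_pow_apply [IsOrderedRing R] (hA : ∀ i j, 0 ≤ A i j)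
    (hAB : ∀ i j, A i j ≤ B i j) (k : ℕ) (i j : n) : (A ^ k) i j ≤ (B ^ k) i j := by
  induction k generalizing j with
  | zero => rfl
  | succ k ih =>
    rw [pow_succ, pow_succ, mul_apply, mul_apply]
    exact sum_le_sum fun l _ ↦
      mul_le_mul (ih l) (hAB l j) (hA l j) ((pow_apply_nonneg hA k i l).trans (ih l))

theorem trace_pow_le_trace_pow [IsOrderedRing R] (hA : ∀ i j, 0 ≤ A i j)
    (hAB : ∀ i j, A i j ≤ B i j) (k : ℕ) :
    (A ^ k).trace ≤ (B ^ k).trace :=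
  sum_le_sum fun i _ ↦ pow_apply_le_pow_apply hA hAB k i i

theorem trace_sq_lt_trace_sq [IsStrictOrderedRing R] (hA : ∀ i j, 0 ≤ A i j)
    (hAB : ∀ i j, A i j ≤ B i j) {x y : n} (hxy : A x y * A y x < B x y * B y x) :
    (A ^ 2).trace < (B ^ 2).trace := by
  have hmul (i j : n) : A i j * A j i ≤ B i j * B j i :=
    mul_le_mul (hAB i j) (hAB j i) (hA j i) ((hA i j).trans (hAB i j))
  simp only [sq, trace, diag, mul_apply]
  exact sum_lt_sum (fun i _ ↦ sum_le_sum fun j _ ↦ hmul i j)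
    ⟨x, mem_univ x, sum_lt_sum (fun j _ ↦ hmul x j) ⟨y, mem_univ y, hxy⟩⟩

end Matrix

section SignlessLaplacian

variable [Fintype V]

theorem sLap_apply (G : SimpleGraph V) (i j : V) :
    sLap G i j = (if i = j then (G.degree i : ℝ) else 0) + if G.Adj i j then 1 else 0 := by
  simp [sLap, diagonal_apply]

theorem sLap_apply_nonneg (G : SimpleGraph V) (i j : V) : 0 ≤ sLap G i j := by
  rw [sLap_apply]
  split_ifs <;> positivity

theorem sLap_apply_mono {G H : SimpleGraph V} (hGH : G ≤ H) (i j : V) :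
    sLap G i j ≤ sLap H i j := by
  have hdeg : (G.degree i : ℝ) ≤ H.degree i := by exact_mod_cast SimpleGraph.degree_le_of_le hGH
  simp only [sLap_apply]
  gcongr
  · split_ifs <;> simp [hdeg]
  · by_cases hG : G.Adj i j
    · simp [hG, hGH hG]
    · simp only [hG, if_false]
      split_ifs <;> norm_num

theorem hasSum_SLEE (G : SimpleGraph V) :
    HasSum (fun k ↦ (sLap G ^ k).trace / k !) (SLEE G) :=
  (sLap_isHermitian G).hasSum_trace_pow_div_factorial

theorem SLEE_strictMono : StrictMono (fun G : SimpleGraph V ↦ SLEE G) := by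
  intro G H hGH
  obtain ⟨hle, hnot⟩ := lt_iff_le_not_ge.mp hGH
  obtain ⟨x, y, hHxy, hGxy⟩ : ∃ x y, H.Adj x y ∧ ¬ G.Adj x y := by
    by_contra! h
    exact hnot fun x y ↦ h x y
  have hsq : sLap G x y * sLap G y x < sLap H x y * sLap H y x := by
    simp [sLap_apply, hHxy.ne, hHxy.ne.symm, hHxy, hHxy.symm, hGxy]
  refine hasSum_lt (i := 2) (fun k ↦ ?_) ?_ (hasSum_SLEE G) (hasSum_SLEE H)
  · gcongr
    exact trace_pow_le_trace_pow (sLap_apply_nonneg G) (sLap_apply_mono hle) k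
  · gcongr
    exact trace_sq_lt_trace_sq (sLap_apply_nonneg G) (sLap_apply_mono hle) hsq

end SignlessLaplacian

open SimpleGraph

theorem SimpleGraph.Connected.numComponents_eq_one {G : SimpleGraph V} (hG : G.Connected) :
    numComponents G = 1 :=
  Nat.card_eq_one_iff_unique.mpr
    ⟨hG.preconnected.subsingleton_connectedComponent, hG.nonempty.map G.connectedComponentMk⟩

theorem SimpleGraph.Connected.preconnected_induce_compl [Finite V] {G : SimpleGraph V}
    (hG : G.Connected) {v : V} (hv : ¬ IsCutVertex G v) :
    (G.induce ({v}ᶜ : Set V)).Preconnected := by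
  -- `Nat.card` is `0` on infinite types, hence the finiteness assumption.
  rw [IsCutVertex, not_lt, hG.numComponents_eq_one, numComponents,
    Finite.card_le_one_iff_subsingleton] at hv
  exact fun a b ↦ ConnectedComponent.exact (Subsingleton.elim _ _)

theorem IsBlock.reachable_induce_compl [Finite V] {G : SimpleGraph V} {B : Set V}
    (hB : IsBlock G B) {x y v : V} (hx : x ∈ B) (hy : y ∈ B) (hxv : x ≠ v) (hyv : y ≠ v) :
    (G.induce ({v}ᶜ : Set V)).Reachable ⟨x, hxv⟩ ⟨y, hyv⟩ := by
  by_cases hvB : v ∈ B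
  · let f : (G.induce B).induce ({⟨v, hvB⟩}ᶜ : Set B) →g G.induce ({v}ᶜ : Set V) :=
      { toFun w := ⟨w.1.1, fun h ↦ w.2 (Subtype.ext h)⟩, map_rel' := id }
    exact (hB.1.preconnected_induce_compl (hB.2.1 ⟨v, hvB⟩)
      ⟨⟨x, hx⟩, fun h ↦ hxv congr($h.1)⟩ ⟨⟨y, hy⟩, fun h ↦ hyv congr($h.1)⟩).map f
  · exact (hB.1.preconnected ⟨x, hx⟩ ⟨y, hy⟩).map
      (induceHom (t := {v}ᶜ) .id fun b hb (hbv : b = v) ↦ hvB (hbv ▸ hb))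

theorem numComponents_eq_of_le_of_forall_adj_reachable {G H : SimpleGraph V} (hGH : G ≤ H)
    (hH : ∀ a b, H.Adj a b → G.Reachable a b) : numComponents H = numComponents G := by
  refine Nat.card_congr (Quot.congr (Equiv.refl V) fun a b ↦ ⟨?_, fun h ↦ h.mono hGH⟩)
  rintro ⟨w⟩
  induction w with
  | nil => rfl
  | cons h _ ih => exact (hH _ _ h).trans ih

section AddEdge

variable {G : SimpleGraph V} {x y : V}

theorem numComponents_sup_edge (hxy : G.Reachable x y) :
    numComponents (G ⊔ edge x y) = numComponents G := by
  refine numComponents_eq_of_le_of_forall_adj_reachable le_sup_left fun a b h ↦ ?_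
  rcases h with h | h
  · exact h.reachable
  · rcases ((edge_adj ..).1 h).1 with ⟨rfl, rfl⟩ | ⟨rfl, rfl⟩
    exacts [hxy, hxy.symm]

theorem numComponents_induce_sup_edge {s : Set V}
    (hxy : ∀ (hx : x ∈ s) (hy : y ∈ s), (G.induce s).Reachable ⟨x, hx⟩ ⟨y, hy⟩) :
    numComponents ((G ⊔ edge x y).induce s) = numComponents (G.induce s) := by
  refine numComponents_eq_of_le_of_forall_adj_reachable (fun _ _ ↦ Or.inl)
    fun ⟨a, ha⟩ ⟨b, hb⟩ h ↦ ?_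
  rcases h with h | h
  · exact Adj.reachable (G := G.induce s) h
  · rcases ((edge_adj ..).1 h).1 with ⟨rfl, rfl⟩ | ⟨rfl, rfl⟩
    exacts [hxy ha hb, (hxy hb ha).symm]

theorem isCutVertex_sup_edge_iff (hxy : G.Reachable x y)
    (hsep : ∀ v (hxv : x ≠ v) (hyv : y ≠ v),
      (G.induce ({v}ᶜ : Set V)).Reachable ⟨x, hxv⟩ ⟨y, hyv⟩) (v : V) :
    IsCutVertex (G ⊔ edge x y) v ↔ IsCutVertex G v := by
  rw [IsCutVertex, IsCutVertex, numComponents_sup_edge hxy,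
    numComponents_induce_sup_edge (hsep v)]

theorem cutVertexCount_sup_edge [Fintype V] (hxy : G.Reachable x y)
    (hsep : ∀ v (hxv : x ≠ v) (hyv : y ≠ v),
      (G.induce ({v}ᶜ : Set V)).Reachable ⟨x, hxv⟩ ⟨y, hyv⟩) :
    cutVertexCount (G ⊔ edge x y) = cutVertexCount G := by
  simp only [cutVertexCount, isCutVertex_sup_edge_iff hxy hsep]

end AddEdge

/-- in a graph maximizing SLEE among connected graphs on `n` vertices with `r`
cut vertices, every block is complete. -/
theorem blocks_complete_of_max_SLEE [Fintype V] {r : ℕ}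
    (G : SimpleGraph V) (hconn : G.Connected) (hG : cutVertexCount G = r)
    (hmax : ∀ H : SimpleGraph V, H.Connected → cutVertexCount H = r → SLEE H ≤ SLEE G) :
    ∀ B : Set V, IsBlock G B → ∀ x ∈ B, ∀ y ∈ B, x ≠ y → G.Adj x y := by
  intro B hB x hx y hy hxy
  by_contra hnadj
  have hreach : G.Reachable x y :=
    (hB.1.preconnected ⟨x, hx⟩ ⟨y, hy⟩).map (Embedding.induce B).toHom
  have hcut : cutVertexCount (G ⊔ edge x y) = r := by
    rw [cutVertexCount_sup_edge hreach fun v ↦ hB.reachable_induce_compl hx hy, hG]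
  exact (hmax _ (hconn.mono le_sup_left) hcut).not_gt
    (SLEE_strictMono (lt_sup_edge G x y hxy hnadj))
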